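/- arXiv:2107.12035 — 2 statements merged into one kernel-verified Lean document; each statement's English description precedes it below -/
import Mathlib

section
/- (Lemma 2.14.) Let n ≥ 2, 2 ≤ k ≤ n, and let β_0,…,β_{k-2} be nonnegative real numbers. Define f(λ) = σ_k(λ)/σ_{k-1}(λ) − Σ_{l=0}^{k-2} β_l · σ_l(λ)/σ_{k-1}(λ) on Γ_{k-1}, and write f_i(λ) = ∂f/∂λ_i(λ). Then for every λ ∈ Γ_{k-1}: Σ_{i=1}^{n} f_i(λ) ≥ (n−k+1)/k. -/
/-- The `k`-th elementary symmetric function of a vector `lam ∈ ℝⁿ`. -/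
noncomputable def esymm (n k : ℕ) (lam : Fin n → ℝ) : ℝ :=
  ∑ s ∈ Finset.powersetCard k (Finset.univ : Finset (Fin n)), ∏ i ∈ s, lam i

/-- The Gårding cone `Γ_k = {λ ∈ ℝⁿ : σ_j(λ) > 0 for all 1 ≤ j ≤ k}`. -/
def GammaCone (n k : ℕ) : Set (Fin n → ℝ) :=
  {lam | ∀ j : ℕ, 1 ≤ j → j ≤ k → 0 < esymm n j lam}

/-- The Krylov-type operator
`f(λ) = σ_k(λ)/σ_{k-1}(λ) − ∑_{l=0}^{k-2} β_l σ_l(λ)/σ_{k-1}(λ)`. -/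
noncomputable def krylovF (n k : ℕ) (β : ℕ → ℝ) (lam : Fin n → ℝ) : ℝ :=
  esymm n k lam / esymm n (k - 1) lam
    - ∑ l ∈ Finset.range (k - 1), β l * (esymm n l lam / esymm n (k - 1) lam)

/-!
`∑ᵢ fᵢ` is the derivative of `f` in the direction `𝟙 = (1, …, 1)`, and `∂_𝟙 σ_{j+1} = (n - j) σ_j`.
Writing `f = (σ_k - ∑ β_l σ_l) / σ_{k-1}`, this gives `σ_{k-1}² ∑ᵢ fᵢ` as
`(n-k+1) σ_{k-1}² - (n-k+2) σ_{k-2} σ_k + ∑_l β_l ((n-k+2) σ_{k-2} σ_l - σ_{k-1} ∂_𝟙σ_l)`.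
Newton's inequality `k (n-k+2) σ_{k-2} σ_k ≤ (k-1) (n-k+1) σ_{k-1}²` bounds the first two terms
below by `(n-k+1)/k · σ_{k-1}²`, and every summand is nonnegative because on `Γ_{k-1}` the ratios
`σ_{j+1} / ((n-j) σ_j)` decrease in `j`, again by Newton's inequality.

Newton's inequalities for the elementary symmetric functions of a real multiset `s` are proved by
induction on its size: for `j + 2` elements the inequality between `e_j, e_{j+1}, e_{j+2}` is a
direct computation, and the roots of the derivative of `∏_{a ∈ s} (X - a)`, which are real by
Rolle's theorem, have the same normalized elementary symmetric functions `e_j / (size choose j)`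
as `s`.
-/

open Finset Polynomial

theorem Polynomial.card_roots_derivative_of_card_roots_eq (p : ℝ[X])
    (hp : Multiset.card p.roots = p.natDegree) :
    Multiset.card (derivative p).roots = (derivative p).natDegree ∧
      (derivative p).natDegree = p.natDegree - 1 := by
  have := p.card_roots_le_derivative
  have := (derivative p).card_roots'
  have := p.natDegree_derivative_le
  omega

namespace Multiset

variable {R : Type*} [CommSemiring R]

theorem esymm_zero (s : Multiset R) : s.esymm 0 = 1 := by
  simp [esymm]

theorem esymm_cons_succ (a : R) (s : Multiset R) (r : ℕ) :
    (a ::ₘ s).esymm (r + 1) = s.esymm (r + 1) + a * s.esymm r := by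
  simp only [esymm, powersetCard_cons, map_add, sum_add, map_map, Function.comp_def, prod_cons,
    sum_map_mul_left]

theorem esymm_newton_top (s : Multiset ℝ) (j : ℕ) (hs : card s = j + 2) :
    2 * (j + 2) * (s.esymm j * s.esymm (j + 2)) ≤ (j + 1) * s.esymm (j + 1) ^ 2 := by
  induction s using Multiset.induction_on generalizing j with
  | empty => simp at hs
  | cons a t ih =>
    rw [card_cons] at hs
    rcases j with _ | j
    · obtain ⟨b, rfl⟩ := card_eq_one.mp (by omega : card t = 1)
      simp only [Nat.cast_zero, zero_add, esymm_zero, esymm_pair_one, esymm_pair_two]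
      nlinarith [sq_nonneg (a - b)]
    · have ih := ih j (by omega)
      have htop : t.esymm (j + 3) = 0 := by
        simp [esymm, powersetCard_eq_empty _ (by omega : card t < j + 3)]
      rw [esymm_cons_succ, esymm_cons_succ, esymm_cons_succ, htop]
      push_cast
      -- with `a² · ih`, the difference of the two sides is at least
      -- `((j + 2) e_{j+2}(t) - a e_{j+1}(t))² / (j + 2)`
      nlinarith [mul_nonneg (sq_nonneg a) (sub_nonneg.2 ih),
        sq_nonneg ((j + 2 : ℝ) * t.esymm (j + 2) - a * t.esymm (j + 1))]

/-- `t` is the multiset of roots of the derivative of `∏_{a ∈ s} (X - a)`. -/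
theorem exists_card_mul_esymm_eq (s : Multiset ℝ) :
    ∃ t : Multiset ℝ, card t = card s - 1 ∧
      ∀ i < card s, (card s : ℝ) * t.esymm i = (card s - i) * s.esymm i := by
  set p := (s.map fun a => X - C a).prod
  have hp_coeff : ∀ k ≤ card s, p.coeff k = (-1) ^ (card s - k) * s.esymm (card s - k) :=
    fun _ hk => prod_X_sub_C_coeff s hk
  obtain ⟨hroots, hdeg⟩ := p.card_roots_derivative_of_card_roots_eq
    (by rw [roots_multiset_prod_X_sub_C, natDegree_multiset_prod_X_sub_C_eq_card])
  rw [natDegree_multiset_prod_X_sub_C_eq_card] at hdeg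
  have hprod := C_leadingCoeff_mul_prod_multiset_X_sub_C hroots
  clear_value p
  set t := (derivative p).roots
  set L := (derivative p).leadingCoeff
  refine ⟨t, hroots.trans hdeg, ?_⟩
  have hcoeff : ∀ i < card s, L * t.esymm i = (card s - i) * s.esymm i := by
    intro i hi
    have h := congr_arg (coeff · (card t - i)) hprod
    rw [coeff_C_mul, prod_X_sub_C_coeff t (Nat.sub_le _ _), coeff_derivative,
      hp_coeff (card t - i + 1) (by omega)] at h
    rw [show card t - (card t - i) = i by omega, show card s - (card t - i + 1) = i by omega] at h
    have hcast : ((card t - i : ℕ) : ℝ) + 1 = card s - i := by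
      rw [Nat.cast_sub (by omega), hroots, hdeg, Nat.cast_sub (by omega)]
      push_cast
      ring
    rw [hcast] at h
    apply mul_left_cancel₀ (pow_ne_zero i (by norm_num : (-1 : ℝ) ≠ 0))
    linear_combination h
  intro i hi
  have hL : L = card s := by simpa [esymm_zero] using hcoeff 0 (by omega)
  rw [← hcoeff i hi, hL]

theorem esymm_newton (s : Multiset ℝ) (j : ℕ) (hj : j + 2 ≤ card s) :
    (j + 2) * (card s - j) * (s.esymm j * s.esymm (j + 2)) ≤
      (j + 1) * (card s - j - 1) * s.esymm (j + 1) ^ 2 := by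
  obtain ⟨d, hd⟩ := Nat.exists_eq_add_of_le hj
  induction d generalizing s with
  | zero =>
    rw [hd]
    push_cast
    linarith [esymm_newton_top s j hd]
  | succ d ih =>
    obtain ⟨t, ht, hts⟩ := exists_card_mul_esymm_eq s
    have IH := ih t (by omega) (by omega)
    rw [ht, Nat.cast_sub (by omega)] at IH
    set N : ℝ := (card s : ℝ)
    have e0 := hts j (by omega)
    have e1 := hts (j + 1) (by omega)
    have e2 := hts (j + 2) (by omega)
    push_cast at IH e1 e2
    have hpos : 0 < (N - j - 1) * (N - j - 2) := by
      have : (j : ℝ) + 3 ≤ N := by simp only [N, hd]; push_cast; linarith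
      nlinarith
    refine le_of_mul_le_mul_left ?_ hpos
    -- `N² · IH`, rewritten through `N e_i(t) = (N - i) e_i(s)`
    linear_combination N ^ 2 * IH
      + (j + 1) * (N - j - 2) * ((N - j - 1) * s.esymm (j + 1) + N * t.esymm (j + 1)) * e1
      - (j + 2) * (N - j - 1) * (N * t.esymm (j + 2) * e0 + (N - j) * s.esymm j * e2)

end Multiset

theorem Finset.sum_powersetCard_succ_sum_erase {α M : Type*} [DecidableEq α] [AddCommMonoid M]
    (S : Finset α) (m : ℕ) (g : Finset α → M) :
    ∑ T ∈ S.powersetCard (m + 1), ∑ i ∈ T, g (T.erase i) =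
      ∑ U ∈ S.powersetCard m, (#S - m) • g U := calc
  _ = ∑ (T ∈ S.powersetCard (m + 1)) (i ∈ S) with i ∈ T, g (T.erase i) := by
    rw [← sum_finset_product']
    grind
  _ = ∑ (U ∈ S.powersetCard m) (i ∈ S) with i ∉ U, g U := by
    apply sum_bij' (fun ⟨T, i⟩ _ => ⟨T.erase i, i⟩) (fun ⟨U, i⟩ _ => ⟨insert i U, i⟩)
    all_goals grind [insert_erase, erase_insert]
  _ = ∑ U ∈ S.powersetCard m, ∑ i ∈ S \ U, g U := by
    rw [← sum_finset_product']
    grind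
  _ = _ := by
    refine sum_congr rfl fun U hU => ?_
    rw [sum_const, card_sdiff_of_subset (mem_powersetCard.1 hU).1, (mem_powersetCard.1 hU).2]

section ElementarySymmetric

variable {n : ℕ}

theorem esymm_eq_multiset_esymm (k : ℕ) (lam : Fin n → ℝ) :
    esymm n k lam = (univ.val.map lam).esymm k :=
  (esymm_map_val lam univ k).symm

theorem esymm_zero (lam : Fin n → ℝ) : esymm n 0 lam = 1 := by
  simp [esymm]

theorem esymm_newton (lam : Fin n → ℝ) {j : ℕ} (hj : j + 2 ≤ n) :
    (j + 2) * (n - j) * (esymm n j lam * esymm n (j + 2) lam) ≤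
      (j + 1) * (n - j - 1) * esymm n (j + 1) lam ^ 2 := by
  simpa [esymm_eq_multiset_esymm] using Multiset.esymm_newton (univ.val.map lam) j (by simpa)

theorem esymm_mul_esymm_le_sq (lam : Fin n → ℝ) {j : ℕ} (hj : j + 2 ≤ n) :
    (n - j) * esymm n j lam * esymm n (j + 2) lam ≤ (n - j - 1) * esymm n (j + 1) lam ^ 2 := by
  have hnewton := esymm_newton lam hj
  have : (0 : ℝ) ≤ (n - j - 1) * esymm n (j + 1) lam ^ 2 := by
    have : (j : ℝ) + 2 ≤ n := by exact_mod_cast hj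
    nlinarith [sq_nonneg (esymm n (j + 1) lam)]
  nlinarith

theorem esymm_mul_esymm_succ_le (lam : Fin n → ℝ) {a b : ℕ} (hab : a ≤ b) (hbn : b < n)
    (hpos : ∀ i ≤ b, 0 < esymm n i lam) :
    (n - a) * esymm n a lam * esymm n (b + 1) lam ≤
      (n - b) * esymm n (a + 1) lam * esymm n b lam := by
  have hden : ∀ j ≤ b, 0 < (n - j : ℝ) * esymm n j lam := fun j hj =>
    mul_pos (by rw [sub_pos]; exact_mod_cast (by omega : j < n)) (hpos j hj)
  have hratio : ∀ j, a ≤ j → j ≤ b →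
      esymm n (j + 1) lam / ((n - j) * esymm n j lam) ≤
        esymm n (a + 1) lam / ((n - a) * esymm n a lam) := by
    intro j haj
    induction j, haj using Nat.le_induction with
    | base => exact fun _ => le_rfl
    | succ j _ ih =>
      intro hjb
      refine le_trans ?_ (ih (by omega))
      rw [div_le_div_iff₀ (hden _ hjb) (hden _ (by omega))]
      push_cast
      linear_combination esymm_mul_esymm_le_sq lam (by omega : j + 2 ≤ n)
  have := hratio b hab le_rfl
  rw [div_le_div_iff₀ (hden _ le_rfl) (hden _ hab)] at this
  linear_combination this

theorem hasFDerivAt_esymm (k : ℕ) (lam : Fin n → ℝ) :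
    HasFDerivAt (esymm n k)
      (∑ s ∈ powersetCard k univ, ∑ i ∈ s, (∏ j ∈ s.erase i, lam j) •
        (ContinuousLinearMap.proj i : (Fin n → ℝ) →L[ℝ] ℝ))
      lam :=
  HasFDerivAt.fun_sum fun _ _ => hasFDerivAt_finsetProd

theorem differentiable_esymm (k : ℕ) : Differentiable ℝ (esymm n k) :=
  fun lam => (hasFDerivAt_esymm k lam).differentiableAt

theorem fderiv_esymm_zero (lam : Fin n → ℝ) : fderiv ℝ (esymm n 0) lam = 0 := by
  rw [show esymm n 0 = fun _ => 1 from funext esymm_zero, fderiv_const_apply]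

theorem fderiv_esymm_succ_apply_one (lam : Fin n → ℝ) (j : ℕ) :
    fderiv ℝ (esymm n (j + 1)) lam 1 = (n - j) * esymm n j lam := by
  rw [(hasFDerivAt_esymm _ lam).fderiv]
  simp only [_root_.sum_apply, _root_.smul_apply, ContinuousLinearMap.proj_apply, Pi.one_apply,
    smul_eq_mul, mul_one]
  rw [sum_powersetCard_succ_sum_erase univ j (fun s => ∏ i ∈ s, lam i), esymm, mul_sum]
  rcases le_or_gt j n with hj | hj
  · simp [Nat.cast_sub hj]
  · simp [powersetCard_eq_empty.2 (by simpa using hj : #(univ : Finset (Fin n)) < j)]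

theorem esymm_succ_mul_fderiv_esymm_apply_one_le (lam : Fin n → ℝ) {l m : ℕ} (hl : l ≤ m)
    (hm : m < n) (hpos : ∀ i ≤ m, 0 < esymm n i lam) :
    esymm n (m + 1) lam * fderiv ℝ (esymm n l) lam 1 ≤ (n - m) * esymm n m lam * esymm n l lam := by
  rcases l with _ | a
  · have : (0 : ℝ) < n - m := by rw [sub_pos]; exact_mod_cast hm
    have := hpos m le_rfl
    rw [fderiv_esymm_zero, zero_apply, mul_zero, esymm_zero]
    positivity
  · rw [fderiv_esymm_succ_apply_one]
    linear_combination esymm_mul_esymm_succ_le lam (by omega : a ≤ m) hm hpos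

end ElementarySymmetric

section Krylov

variable {n : ℕ}

theorem krylovF_eq_div (m : ℕ) (β : ℕ → ℝ) :
    krylovF n (m + 2) β = fun lam =>
      (esymm n (m + 2) lam - ∑ l ∈ range (m + 1), β l * esymm n l lam) / esymm n (m + 1) lam := by
  ext lam
  simp only [krylovF, sub_div, sum_div, mul_div_assoc]
  rfl

theorem fderiv_krylovF_apply_one (m : ℕ) (β : ℕ → ℝ) (lam : Fin n → ℝ)
    (hσ : esymm n (m + 1) lam ≠ 0) :
    fderiv ℝ (krylovF n (m + 2) β) lam 1 =
      ((n - m - 1) * esymm n (m + 1) lam ^ 2 - (n - m) * esymm n m lam * esymm n (m + 2) lam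
        + ∑ l ∈ range (m + 1), β l * ((n - m) * esymm n m lam * esymm n l lam
          - esymm n (m + 1) lam * fderiv ℝ (esymm n l) lam 1)) / esymm n (m + 1) lam ^ 2 := by
  have hesymm (l : ℕ) := (differentiable_esymm (n := n) l lam).hasFDerivAt
  have hnum := (hesymm (m + 2)).fun_sub
    (HasFDerivAt.fun_sum (u := range (m + 1)) fun l _ => (hesymm l).const_mul (β l))
  have hinv : HasFDerivAt (fun x => (esymm n (m + 1) x)⁻¹) _ lam :=
    (hasDerivAt_inv hσ).comp_hasFDerivAt lam (hesymm (m + 1))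
  have hsum : ∑ l ∈ range (m + 1), β l * ((n - m) * esymm n m lam * esymm n l lam
        - esymm n (m + 1) lam * fderiv ℝ (esymm n l) lam 1) =
      (n - m) * esymm n m lam * ∑ l ∈ range (m + 1), β l * esymm n l lam
        - esymm n (m + 1) lam * ∑ l ∈ range (m + 1), β l * fderiv ℝ (esymm n l) lam 1 := by
    rw [mul_sum, mul_sum, ← sum_sub_distrib]
    exact sum_congr rfl fun l _ => by ring
  rw [krylovF_eq_div, hsum]
  simp only [div_eq_mul_inv]
  rw [(hnum.fun_mul hinv).fderiv]
  simp only [neg_smul, smul_neg, add_apply, neg_apply, smul_apply, sub_apply, _root_.sum_apply,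
    smul_eq_mul, fderiv_esymm_succ_apply_one, Nat.cast_add, Nat.cast_one]
  field_simp
  ring

end Krylov

theorem krylovF_derivative_sum_lower_bound_general (n k : ℕ) (hk : 2 ≤ k)
    (hkn : k ≤ n) (β : ℕ → ℝ) (hβ : ∀ l ≤ k - 2, 0 ≤ β l)
    (lam : Fin n → ℝ) (hlam : lam ∈ GammaCone n (k - 1)) :
    ∑ i : Fin n, fderiv ℝ (krylovF n k β) lam (Pi.single i 1)
      ≥ ((n : ℝ) - (k : ℝ) + 1) / (k : ℝ) := by
  obtain ⟨m, rfl⟩ : ∃ m, k = m + 2 := ⟨k - 2, by omega⟩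
  simp only [Nat.add_sub_cancel] at hβ
  have hpos : ∀ i ≤ m + 1, 0 < esymm n i lam := fun i hi => by
    rcases i with _ | i
    · exact esymm_zero lam ▸ one_pos
    · exact hlam (i + 1) (by omega) (by omega)
  have hσ := hpos (m + 1) le_rfl
  have hnewton := esymm_newton lam hkn
  have hsum : 0 ≤ ∑ l ∈ range (m + 1), β l * ((n - m) * esymm n m lam * esymm n l lam
      - esymm n (m + 1) lam * fderiv ℝ (esymm n l) lam 1) :=
    sum_nonneg fun l hl => mul_nonneg (hβ l (Nat.lt_succ_iff.1 (mem_range.1 hl))) <|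
      sub_nonneg.2 <| esymm_succ_mul_fderiv_esymm_apply_one_le lam
        (Nat.lt_succ_iff.1 (mem_range.1 hl)) (by omega) fun i hi => hpos i (by omega)
  rw [← map_sum, show ∑ i : Fin n, Pi.single i (1 : ℝ) = 1 from univ_sum_single 1,
    fderiv_krylovF_apply_one m β lam hσ.ne', ge_iff_le, le_div_iff₀ (by positivity)]
  push_cast
  rw [div_mul_eq_mul_div, div_le_iff₀ (by positivity)]
  nlinarith [mul_nonneg (by positivity : (0 : ℝ) ≤ m + 2) hsum]

/-- Lemma 2.14: for nonnegative `β_0, …, β_{k-2}` and `λ ∈ Γ_{k-1}`,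
`∑ᵢ fᵢ(λ) ≥ (n−k+1)/k`. -/
theorem krylovF_derivative_sum_lower_bound (n k : ℕ) (hn : 2 ≤ n) (hk : 2 ≤ k)
    (hkn : k ≤ n) (β : ℕ → ℝ) (hβ : ∀ l ≤ k - 2, 0 ≤ β l)
    (lam : Fin n → ℝ) (hlam : lam ∈ GammaCone n (k - 1)) :
    ∑ i : Fin n, fderiv ℝ (krylovF n k β) lam (Pi.single i 1)
      ≥ ((n : ℝ) - (k : ℝ) + 1) / (k : ℝ) :=
  krylovF_derivative_sum_lower_bound_general n k hk hkn β hβ lam hlam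
end

section
/- (Algebraic version of the uniform-ellipticity lemma of Section 6.) Let n ≥ 2, 2 ≤ k ≤ n and 0 ≤ l₀ ≤ k−2. For every C > 0 there exists c > 0, depending only on n, k, l₀ and C, such that every λ ∈ Γ_{k-1} satisfying σ_{l₀}(λ) ≤ C · σ_{k-1}(λ) also satisfies σ_{k-1}(λ) ≥ c. -/
/-!
On `Γ_{k-1}` the normalized means `p_i = σ_i(λ) / C(n, i)` are positive for `i ≤ k - 1`, with
`p_0 = 1`, and Newton's inequalities `p_i p_{i+2} ≤ p_{i+1}²` (valid for all real vectors) make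
them log-concave, hence Maclaurin's inequality `p_{k-1}^{l₀} ≤ p_{l₀}^{k-1}`. The hypothesis reads
`p_{l₀} ≤ a p_{k-1}` with `a = C · C(n, k-1) / C(n, l₀)`, so `p_{k-1}^{l₀} ≤ a^{k-1} p_{k-1}^{k-1}`,
and since `l₀ < k - 1` this forces `p_{k-1} ≥ min 1 a^{-(k-1)}`.

Newton's inequalities are proved by induction on the number of variables. With exactly `j + 2`
variables, `σ_{j+1}² = Σ_i (∏_{m ≠ i} λ_m)² + 2 σ_j σ_{j+2}`, and Cauchy–Schwarz on the `j + 2`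
leave-one-out products gives the claim. With more variables, the roots of the derivative of
`∏ (X - λ_i)` are real by Rolle's theorem, one fewer in number, and have the same normalized
means `p_i`, so the induction hypothesis applies to them.
-/

namespace Multiset

theorem sum_map_powersetCard_succ_cons {α M : Type*} [AddCommMonoid M] (f : Multiset α → M)
    (a : α) (s : Multiset α) (k : ℕ) :
    (((a ::ₘ s).powersetCard (k + 1)).map f).sum =
      ((s.powersetCard (k + 1)).map f).sum +
        ((s.powersetCard k).map fun t => f (a ::ₘ t)).sum := by
  rw [powersetCard_cons, map_add, sum_add, map_map, Function.comp_def]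

section CommRing

variable {R : Type*} [CommRing R]

theorem esymm_succ_cons (a : R) (s : Multiset R) (k : ℕ) :
    (a ::ₘ s).esymm (k + 1) = s.esymm (k + 1) + a * s.esymm k := by
  simp only [esymm, sum_map_powersetCard_succ_cons, prod_cons, sum_map_mul_left]

theorem esymm_card (s : Multiset R) : s.esymm (card s) = s.prod := by
  simp [esymm, powersetCard_self]

theorem sq_esymm_eq_sum_sq_add_of_card_eq (s : Multiset R) (m : ℕ) (h : card s = m + 2) :
    s.esymm (m + 1) ^ 2 =
      ((s.powersetCard (m + 1)).map fun t => t.prod ^ 2).sum + 2 * s.esymm m * s.prod := by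
  induction s using Multiset.induction generalizing m with
  | empty => simp at h
  | cons a t ih =>
    rw [card_cons] at h
    cases m with
    | zero =>
      obtain ⟨b, rfl⟩ := card_eq_one.1 (by omega : card t = 1)
      simp [esymm, powersetCard_one]
      ring
    | succ m =>
      have ht : card t = m + 2 := by omega
      have htop : t.esymm (m + 2) = t.prod := ht ▸ esymm_card t
      have hsq : ((t.powersetCard (m + 2)).map fun u => u.prod ^ 2).sum = t.prod ^ 2 := by
        simp [← ht, powersetCard_self]
      rw [sum_map_powersetCard_succ_cons, hsq, esymm_succ_cons, esymm_succ_cons, htop]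
      simp only [prod_cons, mul_pow, sum_map_mul_left]
      linear_combination a ^ 2 * ih m ht

end CommRing

section Ordered

variable {R : Type*} [CommRing R] [LinearOrder R] [IsStrictOrderedRing R]

theorem sq_sum_le_card_mul_sum_sq (s : Multiset R) :
    s.sum ^ 2 ≤ card s * (s.map (· ^ 2)).sum := by
  induction s using Multiset.induction with
  | empty => simp
  | cons a s ih =>
    simp only [sum_cons, card_cons, map_cons, Nat.cast_add, Nat.cast_one]
    have hsq : 0 ≤ (s.map (· ^ 2)).sum := sum_nonneg fun x hx => by
      obtain ⟨y, -, rfl⟩ := mem_map.1 hx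
      positivity
    rcases (card s).eq_zero_or_pos with h | h
    · simp [card_eq_zero.1 h]
    · have hc : (1 : R) ≤ card s := by exact_mod_cast h
      nlinarith [sq_nonneg (card s * a - s.sum)]

theorem two_mul_card_mul_esymm_mul_prod_le (s : Multiset R) (m : ℕ) (h : card s = m + 2) :
    2 * (m + 2) * (s.esymm m * s.prod) ≤ (m + 1) * s.esymm (m + 1) ^ 2 := by
  have hcard : card ((s.powersetCard (m + 1)).map prod) = m + 2 := by
    rw [card_map, card_powersetCard, h, Nat.choose_succ_self_right]
  have hcauchy : s.esymm (m + 1) ^ 2 ≤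
      (m + 2) * ((s.powersetCard (m + 1)).map fun t => t.prod ^ 2).sum := by
    have := sq_sum_le_card_mul_sum_sq ((s.powersetCard (m + 1)).map prod)
    rw [hcard, map_map, Function.comp_def] at this
    exact_mod_cast this
  nlinarith [sq_esymm_eq_sum_sq_add_of_card_eq s m h]

end Ordered

end Multiset

namespace Polynomial

theorem card_roots_derivative_of_card_roots {p : ℝ[X]}
    (hp : Multiset.card p.roots = p.natDegree) :
    Multiset.card (derivative p).roots = (derivative p).natDegree :=
  le_antisymm (card_roots' _) <| by
    have := card_roots_le_derivative p
    rw [natDegree_derivative]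
    omega

end Polynomial

namespace Multiset

open Polynomial in
/-- Take for `u` the roots of the derivative of `∏ (X - a)` and compare the coefficients of
`X ^ (m - i)` by Vieta's formulas. -/
theorem exists_card_eq_esymm_eq_of_card_eq_succ (s : Multiset ℝ) (m : ℕ) (h : card s = m + 1) :
    ∃ u : Multiset ℝ, card u = m ∧
      ∀ i ≤ m, (m + 1 : ℝ) * u.esymm i = ((m + 1 - i : ℕ) : ℝ) * s.esymm i := by
  set p : ℝ[X] := (s.map fun a => X - C a).prod
  have hp : p.natDegree = m + 1 := by rw [natDegree_multiset_prod_X_sub_C_eq_card, h]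
  have hlc : p.leadingCoeff = 1 := monic_multiset_prod_of_monic _ _ fun a _ => monic_X_sub_C a
  have hg : (derivative p).natDegree = m := by rw [natDegree_derivative, hp]; rfl
  have hroots : card (derivative p).roots = (derivative p).natDegree :=
    card_roots_derivative_of_card_roots (by rw [roots_multiset_prod_X_sub_C, hp, h])
  refine ⟨(derivative p).roots, hroots.trans hg, fun i hi => ?_⟩
  have hp_coeff : p.coeff (m - i + 1) = (-1) ^ i * s.esymm i := by
    rw [prod_X_sub_C_coeff s (by omega), h, show m + 1 - (m - i + 1) = i by omega]
  have hg_coeff := coeff_eq_esymm_roots_of_card hroots (k := m - i) (by omega)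
  rw [coeff_derivative, hp_coeff, leadingCoeff_derivative, hlc, hp, hg,
    show m - (m - i) = i by omega, Nat.cast_sub hi] at hg_coeff
  apply mul_left_cancel₀ (pow_ne_zero i (by norm_num : (-1 : ℝ) ≠ 0))
  rw [Nat.cast_sub (by omega : i ≤ m + 1)]
  push_cast at hg_coeff ⊢
  linear_combination -hg_coeff

noncomputable def esymmMean (s : Multiset ℝ) (i : ℕ) : ℝ :=
  s.esymm i / (card s).choose i

theorem esymmMean_zero (s : Multiset ℝ) : s.esymmMean 0 = 1 := by
  simp [esymmMean, esymm]

theorem exists_card_eq_esymmMean_eq_of_card_eq_succ (s : Multiset ℝ) (m : ℕ)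
    (h : card s = m + 1) :
    ∃ u : Multiset ℝ, card u = m ∧ ∀ i ≤ m, u.esymmMean i = s.esymmMean i := by
  obtain ⟨u, hu, hrel⟩ := exists_card_eq_esymm_eq_of_card_eq_succ s m h
  refine ⟨u, hu, fun i hi => ?_⟩
  have hchoose : ((m.choose i * (m + 1) : ℕ) : ℝ) = ((m + 1).choose i * (m + 1 - i) : ℕ) :=
    congrArg _ (Nat.choose_mul_succ_eq m i)
  have hm : (0 : ℝ) < m.choose i := by exact_mod_cast Nat.choose_pos hi
  have hm' : (0 : ℝ) < (m + 1).choose i := by exact_mod_cast Nat.choose_pos (by omega)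
  rw [esymmMean, esymmMean, hu, h, div_eq_div_iff hm.ne' hm'.ne']
  apply mul_left_cancel₀ (by positivity : (m + 1 : ℝ) ≠ 0)
  push_cast at hchoose
  linear_combination ((m + 1).choose i : ℝ) * hrel i hi - s.esymm i * hchoose

theorem esymmMean_mul_esymmMean_le_sq_of_card_eq (s : Multiset ℝ) (m : ℕ)
    (h : card s = m + 2) :
    s.esymmMean m * s.esymmMean (m + 2) ≤ s.esymmMean (m + 1) ^ 2 := by
  have hnewton := two_mul_card_mul_esymm_mul_prod_le s m h
  have htop : s.esymm (m + 2) = s.prod := h ▸ esymm_card s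
  have hchoose : ((m + 2).choose m : ℝ) = (m + 2) * (m + 1) / 2 := by
    rw [Nat.choose_symm_of_eq_add rfl, Nat.cast_choose_two]
    push_cast
    ring
  simp only [esymmMean, h, htop, Nat.choose_self, Nat.choose_succ_self_right, hchoose]
  rw [div_mul_div_comm, div_pow, div_le_div_iff₀ (by positivity) (by positivity)]
  push_cast
  nlinarith [sq_nonneg (s.esymm (m + 1))]

theorem esymmMean_mul_esymmMean_le_sq (s : Multiset ℝ) (j : ℕ) (h : j + 2 ≤ card s) :
    s.esymmMean j * s.esymmMean (j + 2) ≤ s.esymmMean (j + 1) ^ 2 := by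
  obtain ⟨d, hd⟩ := Nat.exists_eq_add_of_le h
  induction d generalizing s with
  | zero => exact esymmMean_mul_esymmMean_le_sq_of_card_eq s j hd
  | succ d ih =>
    obtain ⟨u, hu, hmean⟩ := exists_card_eq_esymmMean_eq_of_card_eq_succ s (j + 2 + d) hd
    rw [← hmean j (by omega), ← hmean (j + 1) (by omega), ← hmean (j + 2) (by omega)]
    exact ih u (by omega) hu

end Multiset

section Maclaurin

open Finset

theorem pow_prod_range_le_prod_range_pow {r : ℕ → ℝ} {K l : ℕ} (hlK : l ≤ K)
    (hr₀ : ∀ i < K, 0 ≤ r i) (hr : ∀ i j, i ≤ j → j < K → r j ≤ r i) :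
    (∏ i ∈ range K, r i) ^ l ≤ (∏ i ∈ range l, r i) ^ K := by
  rcases hlK.eq_or_lt with rfl | hlK
  · rfl
  set P := ∏ i ∈ range l, r i
  have hP : r l ^ l ≤ P := by
    simpa using prod_le_prod (s := range l) (fun i hi => hr₀ l hlK)
      (fun i hi => hr i l (mem_range.1 hi).le hlK)
  have hQ : ∏ i ∈ Ico l K, r i ≤ r l ^ (K - l) := by
    simpa using prod_le_prod (s := Ico l K) (fun i hi => hr₀ i (mem_Ico.1 hi).2)
      (fun i hi => hr l i (mem_Ico.1 hi).1 (mem_Ico.1 hi).2)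
  have hP₀ : 0 ≤ P := prod_nonneg fun i hi => hr₀ i ((mem_range.1 hi).trans hlK)
  have hQ₀ : 0 ≤ ∏ i ∈ Ico l K, r i := prod_nonneg fun i hi => hr₀ i (mem_Ico.1 hi).2
  calc (∏ i ∈ range K, r i) ^ l = P ^ l * (∏ i ∈ Ico l K, r i) ^ l := by
        rw [← prod_range_mul_prod_Ico r hlK.le, mul_pow]
    _ ≤ P ^ l * (r l ^ l) ^ (K - l) := by
        rw [← pow_mul, mul_comm l, pow_mul]
        gcongr
    _ ≤ P ^ l * P ^ (K - l) := by gcongr; exact pow_nonneg (hr₀ l hlK) l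
    _ = P ^ K := by rw [← pow_add, Nat.add_sub_cancel' hlK.le]

theorem pow_le_pow_of_log_concave {p : ℕ → ℝ} {K l : ℕ} (hlK : l ≤ K) (hp₀ : p 0 = 1)
    (hpos : ∀ i ≤ K, 0 < p i) (hconc : ∀ i, i + 2 ≤ K → p i * p (i + 2) ≤ p (i + 1) ^ 2) :
    p K ^ l ≤ p l ^ K := by
  set r : ℕ → ℝ := fun i => p (i + 1) / p i
  have hprod : ∀ m ≤ K, p m = ∏ i ∈ range m, r i := by
    intro m hm
    induction m with
    | zero => simpa using hp₀
    | succ m ih =>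
      rw [prod_range_succ, ← ih (by omega), mul_div_cancel₀ _ (hpos m (by omega)).ne']
  have hstep : ∀ i, i + 2 ≤ K → r (i + 1) ≤ r i := fun i hi => by
    rw [div_le_div_iff₀ (hpos _ (by omega)) (hpos _ (by omega))]
    nlinarith [hconc i hi]
  have hanti : ∀ i j, i ≤ j → j < K → r j ≤ r i := by
    intro i j hij
    induction j, hij using Nat.le_induction with
    | base => exact fun _ => le_rfl
    | succ j _ ih => exact fun hj => (hstep j (by omega)).trans (ih (by omega))
  rw [hprod K le_rfl, hprod l hlK]
  exact pow_prod_range_le_prod_range_pow hlK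
    (fun i hi => (div_pos (hpos _ hi) (hpos _ hi.le)).le) hanti

end Maclaurin

theorem min_one_inv_pow_le_of_pow_le_pow {a x y : ℝ} {l K : ℕ} (hlK : l < K) (ha : 0 < a)
    (hx : 0 < x) (hy : 0 ≤ y) (hyx : y ≤ a * x) (hxy : x ^ l ≤ y ^ K) :
    min 1 (a ^ K)⁻¹ ≤ x := by
  have hsplit : a ^ K * x ^ l * x ^ (K - l) = (a * x) ^ K := by
    rw [mul_assoc, ← pow_add, Nat.add_sub_cancel' hlK.le, mul_pow]
  have key : 1 ≤ a ^ K * x ^ (K - l) := by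
    have := hxy.trans (pow_le_pow_left₀ hy hyx K)
    rw [← hsplit] at this
    nlinarith [pow_pos hx l]
  rcases le_or_gt 1 x with hx1 | hx1
  · exact (min_le_left _ _).trans hx1
  · refine (min_le_right _ _).trans ?_
    rw [inv_le_iff_one_le_mul₀ (by positivity)]
    calc 1 ≤ a ^ K * x ^ (K - l) := key
      _ ≤ a ^ K * x := by gcongr; exact pow_le_of_le_one hx.le hx1.le (Nat.sub_ne_zero_of_lt hlK)
      _ = x * a ^ K := mul_comm _ _

theorem esymmMean_map_univ {n : ℕ} (lam : Fin n → ℝ) (i : ℕ) :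
    (Finset.univ.val.map lam).esymmMean i = esymm n i lam / n.choose i := by
  rw [Multiset.esymmMean, Finset.esymm_map_val, Multiset.card_map, Finset.card_val,
    Finset.card_univ, Fintype.card_fin, esymm]

theorem sigma_km1_lower_bound_general (n k l0 : ℕ) (hk : 2 ≤ k) (hkn : k ≤ n)
    (hl0 : l0 ≤ k - 2) :
    ∀ C > (0 : ℝ), ∃ c > (0 : ℝ), ∀ lam ∈ GammaCone n (k - 1),
      esymm n l0 lam ≤ C * esymm n (k - 1) lam →
      c ≤ esymm n (k - 1) lam := by
  intro C hC
  have hchoose : ∀ i ≤ n, (0 : ℝ) < n.choose i := fun i hi => by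
    exact_mod_cast Nat.choose_pos hi
  have hK := hchoose (k - 1) (by omega)
  have hl := hchoose l0 (by omega)
  set a := C * n.choose (k - 1) / n.choose l0
  have ha : 0 < a := by positivity
  refine ⟨n.choose (k - 1) * min 1 (a ^ (k - 1))⁻¹, by positivity, fun lam hlam hσ => ?_⟩
  set s : Multiset ℝ := Finset.univ.val.map lam
  have hmean : ∀ i, s.esymmMean i = esymm n i lam / n.choose i := esymmMean_map_univ lam
  have hpos : ∀ i ≤ k - 1, 0 < s.esymmMean i := by
    rintro (_ | i) hi
    · exact s.esymmMean_zero ▸ one_pos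
    · rw [hmean]
      exact div_pos (hlam _ (by omega) hi) (hchoose _ (by omega))
  have hmaclaurin : s.esymmMean (k - 1) ^ l0 ≤ s.esymmMean l0 ^ (k - 1) :=
    pow_le_pow_of_log_concave (by omega) s.esymmMean_zero hpos
      fun i hi => s.esymmMean_mul_esymmMean_le_sq i (by simp [s]; omega)
  have hbound : s.esymmMean l0 ≤ a * s.esymmMean (k - 1) := by
    rw [hmean, hmean, show a * (esymm n (k - 1) lam / n.choose (k - 1)) =
      C * esymm n (k - 1) lam / n.choose l0 by simp only [a]; field_simp]
    exact div_le_div_of_nonneg_right hσ hl.le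
  have hx := min_one_inv_pow_le_of_pow_le_pow (by omega) ha (hpos _ le_rfl)
    (hpos _ (by omega)).le hbound hmaclaurin
  rwa [hmean, le_div_iff₀ hK, mul_comm] at hx

/-- Algebraic version of the uniform-ellipticity lemma of Section 6: for any
`C > 0` there is `c > 0`, depending only on `n, k, l₀, C`, such that every
`λ ∈ Γ_{k-1}` with `σ_{l₀}(λ) ≤ C σ_{k-1}(λ)` satisfies `σ_{k-1}(λ) ≥ c`. -/
theorem sigma_km1_lower_bound (n k l0 : ℕ) (hn : 2 ≤ n) (hk : 2 ≤ k) (hkn : k ≤ n)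
    (hl0 : l0 ≤ k - 2) :
    ∀ C > (0 : ℝ), ∃ c > (0 : ℝ), ∀ lam ∈ GammaCone n (k - 1),
      esymm n l0 lam ≤ C * esymm n (k - 1) lam →
      c ≤ esymm n (k - 1) lam :=
  sigma_km1_lower_bound_general n k l0 hk hkn hl0
end
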